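/- Let X be a compact metric space and f : X → X continuous. Suppose f|_{CR(f)} has the shadowing property and (x, y) ∈ CR(f)² with x ≠ y and x ~ y. Then for every ε with 0 < ε < d(x,y)/2 there exist a positive integer a, a compact f^a-invariant set Y ⊆ CR(f), and a factor map π : (Y, f^a) → ({0,1}^ℕ, σ) (i.e., π continuous surjective with π ∘ f^a = σ ∘ π), where σ is the shift map; moreover π can be chosen so that π^{-1}(0^∞) ⊆ B_ε(x) and π^{-1}(1^∞) ⊆ B_ε(y). -/

import Mathlib

open Metric Filter Set
open scoped Classical

section Defs

variable {X : Type*} [MetricSpace X]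

/-- `(c i)_{i=0}^k` is a δ-chain of `f`. -/
def IsChain' (f : X → X) (δ : ℝ) (c : ℕ → X) (k : ℕ) : Prop :=
  ∀ i < k, dist (f (c i)) (c (i + 1)) ≤ δ

/-- The chain recurrent set of `f`. -/
def CR (f : X → X) : Set X :=
  {x | ∀ δ > 0, ∃ k > 0, ∃ c : ℕ → X, IsChain' f δ c k ∧ c 0 = x ∧ c k = x}

/-- The chain relation `~` on `CR f`. -/
def ChainRel (f : X → X) (x y : X) : Prop :=
  ∀ δ > 0, ∃ m > 0, ∃ N > 0, ∀ n ≥ N,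
    (∃ c : ℕ → X, IsChain' f δ c (m * n) ∧ (∀ i ≤ m * n, c i ∈ CR f) ∧
      c 0 = x ∧ c (m * n) = y) ∧
    (∃ c : ℕ → X, IsChain' f δ c (m * n) ∧ (∀ i ≤ m * n, c i ∈ CR f) ∧
      c 0 = y ∧ c (m * n) = x)

/-- Property* for a pair `(z, w)`, with cycles lying in `CR f`. -/
def PropertyStar (f : X → X) (z w : X) : Prop :=
  ∃ r > 0, ∀ δ > 0, ∃ k > 0, ∃ c c' : ℕ → X,
    IsChain' f δ c k ∧ IsChain' f δ c' k ∧
    (∀ i ≤ k, c i ∈ CR f) ∧ (∀ i ≤ k, c' i ∈ CR f) ∧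
    c 0 = z ∧ c k = z ∧ c' 0 = w ∧ c' k = w ∧
    ∀ i ≤ k, dist (c i) (c' i) > r

/-- Property* for a pair `(z, w)` (cycles not required to lie in `CR f`). -/
def PropertyStar' (f : X → X) (z w : X) : Prop :=
  ∃ r > 0, ∀ δ > 0, ∃ k > 0, ∃ c c' : ℕ → X,
    IsChain' f δ c k ∧ IsChain' f δ c' k ∧
    c 0 = z ∧ c k = z ∧ c' 0 = w ∧ c' k = w ∧
    ∀ i ≤ k, dist (c i) (c' i) > r

/-- Omega-limit set of the point `(x, y)` under `f × f`. -/
def OmegaLimit2 (f : X → X) (x y : X) : Set (X × X) :=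
  {p | ∃ φ : ℕ → ℕ, StrictMono φ ∧
    Tendsto (fun n => (f^[φ n] x, f^[φ n] y)) atTop (nhds p)}

/-- Omega-limit set of a point under `f`. -/
def OmegaLimit1 (f : X → X) (x : X) : Set X :=
  {p | ∃ φ : ℕ → ℕ, StrictMono φ ∧ Tendsto (fun n => f^[φ n] x) atTop (nhds p)}

/-- `(x, y)` is a DC1-pair for `f`. -/
def DC1Pair (f : X → X) (x y : X) : Prop :=
  (∀ δ > 0, Filter.limsup (fun n : ℕ =>
      (((Finset.range n).filter fun i => dist (f^[i] x) (f^[i] y) < δ).card : ℝ) / n)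
      Filter.atTop = 1) ∧
  (∃ δ₀ > 0, Filter.limsup (fun n : ℕ =>
      (((Finset.range n).filter fun i => dist (f^[i] x) (f^[i] y) > δ₀).card : ℝ) / n)
      Filter.atTop = 1)

/-- `f` exhibits distributional chaos of type 1. -/
def ExhibitsDC1 (f : X → X) : Prop :=
  ∃ S : Set X, ¬ S.Countable ∧ ∀ x ∈ S, ∀ y ∈ S, x ≠ y → DC1Pair f x y

/-- `(x, y)` is a Li-Yorke pair for `f`. -/
def LiYorkePair (f : X → X) (x y : X) : Prop :=
  Filter.liminf (fun n => dist (f^[n] x) (f^[n] y)) Filter.atTop = 0 ∧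
  Filter.limsup (fun n => dist (f^[n] x) (f^[n] y)) Filter.atTop > 0

/-- `(x, y)` is a proximal pair for `f`. -/
def ProximalPair (f : X → X) (x y : X) : Prop :=
  Filter.liminf (fun n => dist (f^[n] x) (f^[n] y)) Filter.atTop = 0

/-- `(x, y)` is a distal pair for `f`. -/
def DistalPair (f : X → X) (x y : X) : Prop :=
  0 < ⨅ n : ℕ, dist (f^[n] x) (f^[n] y)

/-- `f` has the limit shadowing property. -/
def LimitShadowing (f : X → X) : Prop :=
  ∀ x : ℕ → X, Tendsto (fun i => dist (f (x i)) (x (i + 1))) atTop (nhds 0) →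
    ∃ p : X, Tendsto (fun i => dist (f^[i] p) (x i)) atTop (nhds 0)

/-- The restriction of `f` to `CR f` has the shadowing property. -/
def ShadowingOnCR (f : X → X) : Prop :=
  ∀ ε > 0, ∃ δ > 0, ∀ x : ℕ → X, (∀ i, x i ∈ CR f) →
    (∀ i, dist (f (x i)) (x (i + 1)) ≤ δ) →
    ∃ p ∈ CR f, ∀ i, dist (f^[i] p) (x i) ≤ ε

/-- Topological entropy of `f` relative to the cover `U`. -/
noncomputable def entropyOfCover (f : X → X) {ι : Type*} (U : ι → Set X) : ℝ :=
  Filter.limsup (fun n : ℕ =>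
    Real.log ((sInf {m : ℕ | ∃ s : Finset (Fin n → ι), s.card = m ∧
      (⋃ g ∈ s, ⋂ i : Fin n, f^[(i : ℕ)] ⁻¹' U (g i)) = Set.univ} : ℕ) : ℝ) / n)
    Filter.atTop

/-- `(x, y)` is an entropy pair for `f`. -/
def EntropyPair (f : X → X) (x y : X) : Prop :=
  x ≠ y ∧ ∀ A B : Set X, IsClosed A → IsClosed B → x ∈ interior A → y ∈ interior B →
    Disjoint A B → 0 < entropyOfCover f (fun b : Bool => if b then Aᶜ else Bᶜ)

end Defs

/-!
Since `x ~ y`, for every `δ` there is one length `a` such that any two of `x`, `y` are joined by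
a δ-chain of length `a` inside `CR f`. Concatenating these blocks along `s ∈ {0,1}^ℕ` gives a
δ-pseudo orbit in `CR f` sitting at `x` or `y` at the times `a n` according to `s n`; a point of
`CR f` shadowing it has an `f^a`-orbit that visits `B̄(x, ε/2)` or `B̄(y, ε/2)` according to `s`.
As the two closed balls are disjoint, recording which one the `f^a`-orbit visits is a factor map
on the compact set of points of `CR f` whose `f^a`-orbit stays in their union.
-/

open Function

section Chains

variable {X : Type*} [MetricSpace X] {f : X → X}

lemma IsChain'.mono {δ δ' : ℝ} {c : ℕ → X} {k : ℕ} (hc : IsChain' f δ c k) (h : δ ≤ δ') :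
    IsChain' f δ' c k :=
  fun i hi => (hc i hi).trans h

lemma IsChain'.replace {δ α : ℝ} {c : ℕ → X} {k : ℕ} {x z : X} (hc : IsChain' f δ c k)
    (hx : dist x z ≤ α) (hfx : dist (f x) (f z) ≤ α) :
    IsChain' f (α + δ + α) (fun i => if c i = z then x else c i) k := by
  have hα : 0 ≤ α := dist_nonneg.trans hx
  intro i hi
  have h₁ : dist (f (if c i = z then x else c i)) (f (c i)) ≤ α := by
    split_ifs with h
    · rwa [h]
    · simpa using hα
  have h₂ : dist (c (i + 1)) (if c (i + 1) = z then x else c (i + 1)) ≤ α := by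
    split_ifs with h
    · rwa [h, dist_comm]
    · simpa using hα
  calc _ ≤ dist _ (f (c i)) + dist (f (c i)) (c (i + 1)) + dist (c (i + 1)) _ :=
        dist_triangle4 _ _ _ _
    _ ≤ α + δ + α := by gcongr; exact hc i hi

lemma IsChain'.rotate {δ : ℝ} {c : ℕ → X} {k : ℕ} (hc : IsChain' f δ c k) (hck : c k = c 0) :
    IsChain' f δ (fun i => if i < k then c (i + 1) else c 1) k := by
  intro i hi
  simp only [if_pos hi]
  rcases (Nat.succ_le_of_lt hi).lt_or_eq with h | h
  · rw [if_pos h]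
    exact hc (i + 1) h
  · rw [if_neg (by omega), show i + 1 = k from h, hck]
    exact hc 0 (by omega)

lemma isClosed_CR (hf : Continuous f) : IsClosed (CR f) := by
  refine isClosed_of_closure_subset fun x hx δ hδ => ?_
  obtain ⟨η, hη, hfη⟩ := Metric.continuous_iff.1 hf x (δ / 3) (by positivity)
  obtain ⟨z, hz, hxz⟩ := Metric.mem_closure_iff.1 hx (min η (δ / 3)) (by positivity)
  obtain ⟨k, hk, c, hc, hc0, hck⟩ := hz (δ / 3) (by positivity)
  have hfxz : dist (f x) (f z) ≤ δ / 3 := by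
    rw [dist_comm]
    exact (hfη z (by rw [dist_comm]; exact hxz.trans_le (min_le_left _ _))).le
  refine ⟨k, hk, _, (hc.replace (hxz.trans_le (min_le_right _ _)).le hfxz).mono (by linarith),
    by simp [hc0], by simp [hck]⟩

lemma mapsTo_CR (hf : Continuous f) : MapsTo f (CR f) (CR f) := by
  intro x hx δ hδ
  obtain ⟨η, hη, hfη⟩ := Metric.continuous_iff.1 hf (f x) (δ / 3) (by positivity)
  obtain ⟨k, hk, c, hc, hc0, hck⟩ := hx (min (η / 2) (δ / 3)) (by positivity)
  -- Rotate the cycle to start at `c 1`, which is close to `f x`, then put `f x` in its place.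
  have hc1 : dist (f x) (c 1) ≤ min (η / 2) (δ / 3) := hc0 ▸ hc 0 hk
  have hfc1 : dist (f (f x)) (f (c 1)) ≤ δ / 3 := by
    rw [dist_comm]
    refine (hfη _ ?_).le
    rw [dist_comm]
    linarith [min_le_left (η / 2) (δ / 3)]
  have hchain := (hc.rotate (hck.trans hc0.symm)).replace
    (hc1.trans (min_le_right _ _)) hfc1
  refine ⟨k, hk, _, hchain.mono (by linarith [min_le_right (η / 2) (δ / 3)]),
    by simp [hk], by simp⟩

end Chains

section CRChains

variable {X : Type*} [MetricSpace X] {f : X → X} {δ : ℝ}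

def HasCRChain (f : X → X) (δ : ℝ) (k : ℕ) (u v : X) : Prop :=
  ∃ c : ℕ → X, IsChain' f δ c k ∧ (∀ i ≤ k, c i ∈ CR f) ∧ c 0 = u ∧ c k = v

lemma HasCRChain.trans {k l : ℕ} {u v w : X} (h₁ : HasCRChain f δ k u v)
    (h₂ : HasCRChain f δ l v w) : HasCRChain f δ (k + l) u w := by
  obtain ⟨c, hc, hcCR, hc0, hck⟩ := h₁
  obtain ⟨d, hd, hdCR, hd0, hdl⟩ := h₂
  refine ⟨fun i => if i ≤ k then c i else d (i - k), fun i hi => ?_, fun i hi => ?_,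
    by simp [hc0], ?_⟩
  · rcases lt_or_ge i k with h | h
    · simp only [if_pos h.le, if_pos (Nat.succ_le_of_lt h)]
      exact hc i h
    · have hd' := hd (i - k) (by omega)
      rw [show i - k + 1 = i + 1 - k by omega] at hd'
      obtain h' | rfl := h.lt_or_eq
      · simpa only [if_neg h'.not_ge, if_neg (by omega : ¬i + 1 ≤ k)] using hd'
      · simpa only [le_refl, if_true, if_neg (by omega : ¬k + 1 ≤ k), hck, ← hd0,
          Nat.sub_self] using hd'
  · dsimp only
    split_ifs with h
    · exact hcCR i h
    · exact hdCR _ (by omega)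
  · rcases l.eq_zero_or_pos with rfl | hl
    · simpa [hck, hd0] using hdl
    · simp [show ¬k + l ≤ k by omega, hdl]

lemma ChainRel.exists_hasCRChain {x y : X} (hrel : ChainRel f x y) (hδ : 0 < δ) :
    ∃ a > 0, ∀ b b' : Bool, HasCRChain f δ a (cond b y x) (cond b' y x) := by
  obtain ⟨m, hm, N, hN, hchains⟩ := hrel δ hδ
  obtain ⟨hxy, hyx⟩ := hchains N le_rfl
  obtain ⟨hxy₂, hyx₂⟩ := hchains (2 * N) (by omega)
  rw [show m * (2 * N) = m * N + m * N by ring] at hxy₂ hyx₂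
  refine ⟨m * N + m * N, by positivity, ?_⟩
  rintro (_ | _) (_ | _)
  exacts [HasCRChain.trans hxy hyx, hxy₂, hyx₂, HasCRChain.trans hyx hxy]

lemma exists_pseudoOrbit_of_forall_hasCRChain {a : ℕ} (ha : 0 < a) {u : ℕ → X}
    (h : ∀ n, HasCRChain f δ a (u n) (u (n + 1))) :
    ∃ ξ : ℕ → X, (∀ j, ξ j ∈ CR f) ∧ (∀ j, dist (f (ξ j)) (ξ (j + 1)) ≤ δ) ∧
      ∀ n, ξ (a * n) = u n := by
  choose c hc hcCR hc0 hca using h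
  set ξ : ℕ → X := fun j => c (j / a) (j % a)
  have hξ : ∀ n r, r < a → ξ (a * n + r) = c n r := fun n r hr => by
    simp only [ξ, Nat.mul_add_div ha, Nat.div_eq_of_lt hr, add_zero, Nat.mul_add_mod,
      Nat.mod_eq_of_lt hr]
  refine ⟨ξ, fun j => hcCR _ _ (Nat.mod_lt j ha).le, fun j => ?_,
    fun n => by simpa [hc0] using hξ n 0 ha⟩
  obtain ⟨n, r, hr, rfl⟩ : ∃ n r, r < a ∧ j = a * n + r :=
    ⟨j / a, j % a, Nat.mod_lt j ha, (Nat.div_add_mod j a).symm⟩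
  rw [hξ n r hr]
  obtain hr' | hr' := (Nat.succ_le_of_lt hr).lt_or_eq
  · rw [add_assoc, hξ n (r + 1) hr']
    exact hc n r hr
  · rw [show a * n + r + 1 = a * (n + 1) + 0 by rw [Nat.mul_succ]; omega, hξ _ 0 ha, hc0,
      ← hca n, ← show r + 1 = a from hr']
    exact hc n r hr

lemma ChainRel.exists_forall_dist_iterate_le (hsh : ShadowingOnCR f) {x y : X}
    (hrel : ChainRel f x y) {r : ℝ} (hr : 0 < r) :
    ∃ a > 0, ∀ s : ℕ → Bool, ∃ p ∈ CR f, ∀ n, dist (f^[a * n] p) (cond (s n) y x) ≤ r := by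
  obtain ⟨δ, hδ, hshadow⟩ := hsh r hr
  obtain ⟨a, ha, hchain⟩ := hrel.exists_hasCRChain hδ
  refine ⟨a, ha, fun s => ?_⟩
  obtain ⟨ξ, hξCR, hξ, hξa⟩ :=
    exists_pseudoOrbit_of_forall_hasCRChain ha fun n => hchain (s n) (s (n + 1))
  obtain ⟨p, hp, hpξ⟩ := hshadow ξ hξCR hξ
  exact ⟨p, hp, fun n => hξa n ▸ hpξ (a * n)⟩

end CRChains

section Itinerary

variable {Z : Type*} {g : Z → Z} {A B : Set Z} {p : Z}

noncomputable def itinerary (g : Z → Z) (B : Set Z) (p : Z) : ℕ → Bool :=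
  fun n => decide (g^[n] p ∈ B)

lemma itinerary_apply_self (g : Z → Z) (B : Set Z) (p : Z) :
    itinerary g B (g p) = fun n => itinerary g B p (n + 1) :=
  rfl

lemma isClosed_setOf_forall_iterate_mem [TopologicalSpace Z] (hg : Continuous g)
    (hA : IsClosed A) : IsClosed {p | ∀ n, g^[n] p ∈ A} := by
  simp only [ofPred_forall]
  exact isClosed_iInter fun n => hA.preimage (hg.iterate n)

lemma mapsTo_setOf_forall_iterate_mem (A : Set Z) :
    MapsTo g {p | ∀ n, g^[n] p ∈ A} {p | ∀ n, g^[n] p ∈ A} :=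
  fun p hp n => by simpa only [← iterate_succ_apply] using hp (n + 1)

lemma continuousOn_decide_mem [TopologicalSpace Z] (hA : IsClosed A) (hB : IsClosed B)
    (hAB : Disjoint A B) : ContinuousOn (fun p => decide (p ∈ B)) (A ∪ B) := by
  intro p _
  refine tendsto_nhds_of_eventually_eq ?_
  by_cases hpB : p ∈ B
  · filter_upwards [self_mem_nhdsWithin, mem_nhdsWithin_of_mem_nhds
      (hA.isOpen_compl.mem_nhds (hAB.notMem_of_mem_right hpB))] with q hq hqA
    simp [hpB, hq.resolve_left hqA]
  · filter_upwards [mem_nhdsWithin_of_mem_nhds (hB.isOpen_compl.mem_nhds hpB)] with q hqB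
    simp [hpB, show q ∉ B from hqB]

lemma continuousOn_itinerary [TopologicalSpace Z] (hg : Continuous g) (hA : IsClosed A)
    (hB : IsClosed B) (hAB : Disjoint A B) :
    ContinuousOn (itinerary g B) {p | ∀ n, g^[n] p ∈ A ∪ B} :=
  continuousOn_pi.2 fun n =>
    (continuousOn_decide_mem hA hB hAB).comp (hg.iterate n).continuousOn fun _ hp => hp n

lemma mem_left_of_itinerary_eq_false (hp : ∀ n, g^[n] p ∈ A ∪ B)
    (h : itinerary g B p = fun _ => false) : p ∈ A :=
  (hp 0).resolve_right (of_decide_eq_false (congrFun h 0))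

lemma mem_of_itinerary_eq_true (h : itinerary g B p = fun _ => true) : p ∈ B :=
  of_decide_eq_true (congrFun h 0)

lemma itinerary_eq_of_forall_mem {U : Bool → Set Z} (hU : Disjoint (U false) (U true))
    {s : ℕ → Bool} (h : ∀ n, g^[n] p ∈ U (s n)) : itinerary g (U true) p = s :=
  funext fun n => match s n, h n with
    | false, hn => decide_eq_false (hU.notMem_of_mem_left hn)
    | true, hn => decide_eq_true hn

lemma forall_iterate_mem_union_of_forall_mem {U : Bool → Set Z} {s : ℕ → Bool}
    (h : ∀ n, g^[n] p ∈ U (s n)) : ∀ n, g^[n] p ∈ U false ∪ U true :=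
  fun n => match s n, h n with
    | false, hn => .inl hn
    | true, hn => .inr hn

end Itinerary

theorem factor_onto_full_shift_general {X : Type*} [MetricSpace X] [CompactSpace X]
    (f : X → X) (hf : Continuous f) (h : ShadowingOnCR f) (x y : X)
    (hrel : ChainRel f x y) :
    ∀ ε : ℝ, 0 < ε → ε < dist x y / 2 →
      ∃ (a : ℕ) (Y : Set X) (π : X → (ℕ → Bool)), 0 < a ∧
        IsCompact Y ∧ Y ⊆ CR f ∧ Set.MapsTo (f^[a]) Y Y ∧
        ContinuousOn π Y ∧
        (∀ s : ℕ → Bool, ∃ p ∈ Y, π p = s) ∧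
        (∀ p ∈ Y, π (f^[a] p) = fun i => π p (i + 1)) ∧
        (∀ p ∈ Y, π p = (fun _ => false) → p ∈ Metric.ball x ε) ∧
        (∀ p ∈ Y, π p = (fun _ => true) → p ∈ Metric.ball y ε) := by
  intro ε hε hεxy
  obtain ⟨a, ha, hfollow⟩ := hrel.exists_forall_dist_iterate_le h (half_pos hε)
  set U : Bool → Set X := fun b => closedBall (cond b y x) (ε / 2)
  have hU : Disjoint (U false) (U true) :=
    show Disjoint (closedBall x _) (closedBall y _) from
      closedBall_disjoint_closedBall (by linarith)
  have hUc : ∀ b, IsClosed (U b) := fun _ => isClosed_closedBall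
  have hball : ∀ z : X, closedBall z (ε / 2) ⊆ ball z ε :=
    fun _ => closedBall_subset_ball (by linarith)
  refine ⟨a, CR f ∩ {p | ∀ n, (f^[a])^[n] p ∈ U false ∪ U true}, itinerary f^[a] (U true), ha,
    ((isClosed_CR hf).inter (isClosed_setOf_forall_iterate_mem (hf.iterate a)
      ((hUc _).union (hUc _)))).isCompact,
    inter_subset_left, ((mapsTo_CR hf).iterate a).inter_inter (mapsTo_setOf_forall_iterate_mem _),
    (continuousOn_itinerary (hf.iterate a) (hUc _) (hUc _) hU).mono inter_subset_right,
    fun s => ?_, fun p _ => itinerary_apply_self _ _ p,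
    fun p hp h0 => hball x (mem_left_of_itinerary_eq_false hp.2 h0),
    fun p _ h1 => hball y (mem_of_itinerary_eq_true h1)⟩
  obtain ⟨p, hp, hps⟩ := hfollow s
  have hmem : ∀ n, (f^[a])^[n] p ∈ U (s n) := fun n => by
    rw [← iterate_mul]
    exact hps n
  exact ⟨p, ⟨hp, forall_iterate_mem_union_of_forall_mem hmem⟩,
    itinerary_eq_of_forall_mem hU hmem⟩

/-- construction of a factor map onto the full shift on two symbols. -/
theorem factor_onto_full_shift {X : Type*} [MetricSpace X] [CompactSpace X]
    (f : X → X) (hf : Continuous f) (h : ShadowingOnCR f) (x y : X)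
    (hx : x ∈ CR f) (hy : y ∈ CR f) (hne : x ≠ y) (hrel : ChainRel f x y) :
    ∀ ε : ℝ, 0 < ε → ε < dist x y / 2 →
      ∃ (a : ℕ) (Y : Set X) (π : X → (ℕ → Bool)), 0 < a ∧
        IsCompact Y ∧ Y ⊆ CR f ∧ Set.MapsTo (f^[a]) Y Y ∧
        ContinuousOn π Y ∧
        (∀ s : ℕ → Bool, ∃ p ∈ Y, π p = s) ∧
        (∀ p ∈ Y, π (f^[a] p) = fun i => π p (i + 1)) ∧
        (∀ p ∈ Y, π p = (fun _ => false) → p ∈ Metric.ball x ε) ∧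
        (∀ p ∈ Y, π p = (fun _ => true) → p ∈ Metric.ball y ε) :=
  factor_onto_full_shift_general f hf h x y hrel
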